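/- The bivariate exponential generating function P(x,y) = sum_{n≥0} sum_{k=-n}^{n} 2^n p_n(k) x^{n+k} y^{n-k} / ((n+k)! (n-k)!) satisfies the PDE (∂/∂x - ∂/∂y)^2 P = 4P, as an identity of formal power series in two variables. -/

import Mathlib

noncomputable def p : ℕ → ℤ → ℤ
  | 0, k => if k = 0 then 1 else 0
  | n + 1, k => ∑ j ∈ Finset.Icc (-(n : ℤ)) (n : ℤ), |j - k| * p n j

/-- `a i j` is the EGF coefficient array of
`P(x,y) = ∑_{n,k} 2^n p_n(k) x^{n+k} y^{n-k}/((n+k)!(n-k)!)`,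
i.e. `a i j = i! j! [x^i y^j] P`: it equals `2^n p_n(k)` when
`i = n + k`, `j = n - k`, and `0` when `i + j` is odd. -/
noncomputable def aP (i j : ℕ) : ℤ :=
  if (i + j) % 2 = 0 then 2 ^ ((i + j) / 2) * p ((i + j) / 2) (((i : ℤ) - (j : ℤ)) / 2) else 0

/-
The second difference of `k ↦ |j - k|` is `2` at `k = j` and `0` elsewhere, so applying the second
difference in `k` to the recursion for `p (n + 1)` isolates the single term `2 p n k`. In the
coefficients `aP`, the three terms on the left of the PDE are `2^(n+1) p (n+1) (k+1)`,
`2^(n+1) p (n+1) k` and `2^(n+1) p (n+1) (k-1)`, while `4 aP i j = 2^(n+1) · 2 p n k`; when `i + j`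
is odd every term vanishes.
-/

lemma abs_sub_second_diff (j k : ℤ) :
    |j - (k + 1)| - 2 * |j - k| + |j - (k - 1)| = if j = k then 2 else 0 := by
  split_ifs with h
  · subst h
    norm_num
  · rw [abs_eq_max_neg, abs_eq_max_neg, abs_eq_max_neg]
    omega

lemma p_succ_second_diff (n : ℕ) (k : ℤ) (hk : k ∈ Finset.Icc (-(n : ℤ)) n) :
    p (n + 1) (k + 1) - 2 * p (n + 1) k + p (n + 1) (k - 1) = 2 * p n k := by
  calc p (n + 1) (k + 1) - 2 * p (n + 1) k + p (n + 1) (k - 1)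
      = ∑ j ∈ Finset.Icc (-(n : ℤ)) n,
          (|j - (k + 1)| - 2 * |j - k| + |j - (k - 1)|) * p n j := by
        simp only [p, Finset.mul_sum, ← Finset.sum_sub_distrib, ← Finset.sum_add_distrib]
        exact Finset.sum_congr rfl fun j _ => by ring
    _ = ∑ j ∈ Finset.Icc (-(n : ℤ)) n, if j = k then 2 * p n j else 0 := by
        refine Finset.sum_congr rfl fun j _ => ?_
        rw [abs_sub_second_diff]
        split_ifs <;> ring
    _ = 2 * p n k := by rw [Finset.sum_ite_eq', if_pos hk]

lemma aP_of_add_eq_two_mul {i j n : ℕ} {k : ℤ} (hn : i + j = 2 * n) (hk : (i : ℤ) - j = 2 * k) :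
    aP i j = 2 ^ n * p n k := by
  have hdiv : (i + j) / 2 = n := by omega
  have hkdiv : ((i : ℤ) - j) / 2 = k := by omega
  rw [aP, if_pos (by omega), hdiv, hkdiv]

lemma aP_of_add_odd {i j : ℕ} (h : (i + j) % 2 = 1) : aP i j = 0 := by
  rw [aP, if_neg (by omega)]

/-- The PDE `(∂/∂x - ∂/∂y)^2 P = 4 P`, stated coefficient-wise for the EGF
coefficients: `a (i+2) j - 2 a (i+1) (j+1) + a i (j+2) = 4 a i j`. -/
theorem P_pde (i j : ℕ) :
    aP (i + 2) j - 2 * aP (i + 1) (j + 1) + aP i (j + 2) = 4 * aP i j := by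
  rcases Nat.mod_two_eq_zero_or_one (i + j) with h | h
  · obtain ⟨n, hn⟩ : ∃ n, i + j = 2 * n := ⟨(i + j) / 2, by omega⟩
    obtain ⟨k, hk⟩ : ∃ k : ℤ, (i : ℤ) - j = 2 * k := ⟨((i : ℤ) - j) / 2, by omega⟩
    rw [aP_of_add_eq_two_mul (n := n + 1) (k := k + 1) (by omega) (by push_cast; omega),
      aP_of_add_eq_two_mul (n := n + 1) (k := k) (by omega) (by push_cast; omega),
      aP_of_add_eq_two_mul (n := n + 1) (k := k - 1) (by omega) (by push_cast; omega),
      aP_of_add_eq_two_mul hn hk]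
    have hk_mem : k ∈ Finset.Icc (-(n : ℤ)) n := Finset.mem_Icc.mpr ⟨by omega, by omega⟩
    linear_combination 2 ^ (n + 1) * p_succ_second_diff n k hk_mem
  · simp only [aP_of_add_odd h, aP_of_add_odd (i := i + 2) (j := j) (by omega),
      aP_of_add_odd (i := i + 1) (j := j + 1) (by omega),
      aP_of_add_odd (i := i) (j := j + 2) (by omega)]
    norm_num
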